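/- For a cartesian monoidal category C (acting on itself by product), there is a natural isomorphism Optic((X,X'), (Y,Y')) ≅ C(X, Y) × C(X × Y', X'); i.e., optics over a cartesian category are equivalent to lenses. -/

import Mathlib

open CategoryTheory MonoidalCategory Limits

universe v u

attribute [local instance] CartesianMonoidalCategory.ofHasFiniteProducts

variable {C : Type u} [Category.{v} C] [HasFiniteProducts C]

structure OpticRep (X X' Y Y' : C) where
  M : C
  f : X ⟶ M ⊗ Y
  f' : M ⊗ Y' ⟶ X'

def OpticRel (X X' Y Y' : C) : OpticRep X X' Y Y' → OpticRep X X' Y Y' → Prop :=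
  fun r₁ r₂ => ∃ h : r₁.M ⟶ r₂.M,
    r₂.f = r₁.f ≫ (h ▷ Y) ∧ r₁.f' = (h ▷ Y') ≫ r₂.f'

def OpticHom (X X' Y Y' : C) : Type _ := Quot (OpticRel X X' Y Y')

/-! The lens of an optic `(M, f, f')` is dinatural in the residual `M`, so it descends to the
coend. A lens `(g, k)` is the optic with residual `X` and `f = ⟨𝟙, g⟩`, and every optic is
related to the optic of its lens by `π_M ∘ f : X ⟶ M`, because `f` factors as
`⟨𝟙, π_Y ∘ f⟩ ≫ (π_M ∘ f × 𝟙)`. -/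

-- Under `ofHasFiniteProducts`, `A ⊗ Y` is definitionally `A ⨯ Y`; this is used implicitly throughout.
lemma whiskerRight_eq_prodMap {A B : C} (h : A ⟶ B) (Y : C) : h ▷ Y = prod.map h (𝟙 Y) := by
  apply prod.hom_ext
  · exact (CartesianMonoidalCategory.whiskerRight_fst h Y).trans (prod.map_fst h (𝟙 Y)).symm
  · exact (CartesianMonoidalCategory.whiskerRight_snd h Y).trans
      ((prod.map_snd h (𝟙 Y)).trans (Category.comp_id _)).symm

section Lens

variable {D : Type*} [Category D] [HasBinaryProducts D] {X X' Y Y' M N : D}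

noncomputable def lensOf (f : X ⟶ M ⨯ Y) (f' : M ⨯ Y' ⟶ X') : (X ⟶ Y) × (X ⨯ Y' ⟶ X') :=
  (f ≫ prod.snd, prod.map (f ≫ prod.fst) (𝟙 Y') ≫ f')

lemma lensOf_comp_prodMap (f : X ⟶ M ⨯ Y) (h : M ⟶ N) (f' : N ⨯ Y' ⟶ X') :
    lensOf (f ≫ prod.map h (𝟙 Y)) f' = lensOf f (prod.map h (𝟙 Y') ≫ f') := by
  simp only [lensOf, Category.assoc, prod.map_snd, prod.map_fst, Category.comp_id,
    prod.map_map_assoc]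

lemma lensOf_lift_id (l : (X ⟶ Y) × (X ⨯ Y' ⟶ X')) : lensOf (prod.lift (𝟙 X) l.1) l.2 = l := by
  simp only [lensOf, prod.lift_snd, prod.lift_fst, prod.map_id_id, Category.id_comp]

lemma prod_lift_id_comp_map_fst (f : X ⟶ M ⨯ Y) :
    prod.lift (𝟙 X) (f ≫ prod.snd) ≫ prod.map (f ≫ prod.fst) (𝟙 Y) = f := by
  rw [prod.lift_map, Category.id_comp, Category.comp_id, ← prod.comp_lift, prod.lift_fst_snd,
    Category.comp_id]

end Lens

namespace OpticRep

variable {X X' Y Y' : C}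

noncomputable def toLens (r : OpticRep X X' Y Y') : (X ⟶ Y) × (X ⨯ Y' ⟶ X') :=
  lensOf r.f r.f'

noncomputable def ofLens (l : (X ⟶ Y) × (X ⨯ Y' ⟶ X')) : OpticRep X X' Y Y' :=
  ⟨X, prod.lift (𝟙 X) l.1, l.2⟩

lemma toLens_eq_of_rel {r₁ r₂ : OpticRep X X' Y Y'} (hr : OpticRel X X' Y Y' r₁ r₂) :
    r₁.toLens = r₂.toLens := by
  obtain ⟨h, hf, hf'⟩ := hr
  rw [whiskerRight_eq_prodMap] at hf hf'
  rw [toLens, toLens, hf, hf']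
  exact (lensOf_comp_prodMap r₁.f h r₂.f').symm

lemma toLens_ofLens (l : (X ⟶ Y) × (X ⨯ Y' ⟶ X')) : (ofLens l).toLens = l :=
  lensOf_lift_id l

lemma ofLens_toLens_rel (r : OpticRep X X' Y Y') : OpticRel X X' Y Y' (ofLens r.toLens) r := by
  refine ⟨r.f ≫ prod.fst, ?_, ?_⟩ <;> rw [whiskerRight_eq_prodMap]
  · exact (prod_lift_id_comp_map_fst r.f).symm
  · rfl

end OpticRep

noncomputable def opticEquivLens (X X' Y Y' : C) :
    OpticHom X X' Y Y' ≃ (X ⟶ Y) × (X ⨯ Y' ⟶ X') where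
  toFun := Quot.lift OpticRep.toLens fun _ _ => OpticRep.toLens_eq_of_rel
  invFun l := Quot.mk _ (OpticRep.ofLens l)
  left_inv := Quot.ind fun r => Quot.sound (OpticRep.ofLens_toLens_rel r)
  right_inv := OpticRep.toLens_ofLens

/-- over a cartesian monoidal category, optics are lenses: there is
a natural bijection `Optic((X,X'),(Y,Y')) ≅ C(X,Y) × C(X × Y', X')`, sending the
class of `(M, f, f')` to `(π_Y ∘ f, f' ∘ (π_M ∘ f × id))`. -/
theorem optics_are_lenses (X X' Y Y' : C) :
    ∃ e : OpticHom X X' Y Y' ≃ ((X ⟶ Y) × (X ⨯ Y' ⟶ X')),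
      ∀ r : OpticRep X X' Y Y',
        e (Quot.mk _ r) =
          (r.f ≫ prod.snd, prod.map (r.f ≫ prod.fst) (𝟙 Y') ≫ r.f') :=
  ⟨opticEquivLens X X' Y Y', fun _ => rfl⟩
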